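/- arXiv:2305.19247 — 3 statements merged into one kernel-verified Lean document; each statement's English description precedes it below -/
import Mathlib

section
/- For every odd integer n ≥ 5, the maximum bipartite Bell value MB(C_n) = 1/2 + ((n-1)/4)·(1+cos(π/(n-1))) is strictly smaller than the Lovász number θ(C_n) = n·cos(π/n)/(1+cos(π/n)). -/
/-!
With `a = π/(2n)` and `b = π/(2(n-1))`, the double-angle formulas give
`θ(C_n) = n/2 - (n/2)·tan² a` and `MB(C_n) = n/2 - ((n-1)/2)·sin² b`, so the claim is
`n·tan² a < (n-1)·sin² b`. The two sides are about `π²/(4n)` and `π²/(4(n-1))`; the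
Taylor bounds `tan² a ≤ a²/(1 - a²/2)²` and `sin b > b(1 - b²/6)` lose less than the
gap of order `1/n²` between them once `n ≥ 5`.
-/

open Real

noncomputable def lovaszNumberCycle (x : ℝ) : ℝ := x * cos (π / x) / (1 + cos (π / x))

noncomputable def bipartiteBellMaxCycle (x : ℝ) : ℝ :=
  1 / 2 + ((x - 1) / 4) * (1 + cos (π / (x - 1)))

lemma tan_sq_le_of_sq_lt_two {θ : ℝ} (hθ : θ ^ 2 < 2) :
    tan θ ^ 2 ≤ θ ^ 2 / (1 - θ ^ 2 / 2) ^ 2 := by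
  have hpos : 0 < 1 - θ ^ 2 / 2 := by linarith
  rw [tan_eq_sin_div_cos, div_pow]
  exact div_le_div₀ (sq_nonneg θ) sin_sq_le_sq (by positivity)
    (pow_le_pow_left₀ hpos.le one_sub_sq_div_two_le_cos 2)

lemma sq_mul_lt_sin_sq_of_sq_le_six {θ : ℝ} (hθ0 : 0 < θ) (hθ : θ ^ 2 ≤ 6) :
    (θ * (1 - θ ^ 2 / 6)) ^ 2 < sin θ ^ 2 := by
  have hpos : 0 ≤ θ * (1 - θ ^ 2 / 6) := mul_nonneg hθ0.le (by linarith)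
  have hsin : θ * (1 - θ ^ 2 / 6) < sin θ := by
    linarith [sin_gt_sub_cube hθ0, show θ * (1 - θ ^ 2 / 6) = θ - θ ^ 3 / 6 by ring]
  exact pow_lt_pow_left₀ hsin hpos two_ne_zero

lemma cos_two_mul_div_one_add_cos_two_mul {θ : ℝ} (h : cos θ ≠ 0) :
    cos (2 * θ) / (1 + cos (2 * θ)) = (1 - tan θ ^ 2) / 2 := by
  rw [cos_two_mul, tan_eq_sin_div_cos, div_pow, sin_sq]
  field_simp
  ring

lemma lovaszNumberCycle_eq {x : ℝ} (hx : cos (π / (2 * x)) ≠ 0) :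
    lovaszNumberCycle x = x / 2 - x / 2 * tan (π / (2 * x)) ^ 2 := by
  have h2 : π / x = 2 * (π / (2 * x)) := by rw [mul_div_assoc', mul_div_mul_left _ _ two_ne_zero]
  rw [lovaszNumberCycle, mul_div_assoc, h2, cos_two_mul_div_one_add_cos_two_mul hx]
  ring

lemma bipartiteBellMaxCycle_eq (x : ℝ) :
    bipartiteBellMaxCycle x = x / 2 - (x - 1) / 2 * sin (π / (2 * (x - 1))) ^ 2 := by
  have h2 : π / (x - 1) = 2 * (π / (2 * (x - 1))) := by
    rw [mul_div_assoc', mul_div_mul_left _ _ two_ne_zero]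
  rw [bipartiteBellMaxCycle, h2, cos_two_mul, cos_sq']
  ring

lemma sub_one_le_mul_taylor_factors {x : ℝ} (hx : 5 ≤ x) :
    x - 1 ≤ x * ((1 - (π / (2 * x)) ^ 2 / 2) ^ 2 * (1 - (π / (2 * (x - 1))) ^ 2 / 6) ^ 2) := by
  set a := π / (2 * x)
  set b := π / (2 * (x - 1))
  set c := π ^ 2 / 4
  have hc0 : 0 ≤ c := by positivity
  have hc : c < 2.5 := by simp only [c]; nlinarith [pi_pos, pi_lt_d2]
  have hxa : x * a ^ 2 ≤ c / 5 := by
    have : x * a ^ 2 = c / x := by simp only [a, c]; field_simp; ring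
    rw [this]; exact div_le_div_of_nonneg_left hc0 (by norm_num) hx
  have hxb : x * b ^ 2 ≤ 5 * c / 16 := by
    have : x * b ^ 2 = c * x / (x - 1) ^ 2 := by
      simp only [b, c]; field_simp [show x - 1 ≠ 0 by linarith]; ring
    have h16 : 16 * x ≤ 5 * (x - 1) ^ 2 := by nlinarith
    rw [this, div_le_div_iff₀ (by nlinarith) (by norm_num)]
    nlinarith [mul_le_mul_of_nonneg_left h16 hc0]
  have hP : 1 - a ^ 2 ≤ (1 - a ^ 2 / 2) ^ 2 := by nlinarith [sq_nonneg (a ^ 2)]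
  have hQ : 1 - b ^ 2 / 3 ≤ (1 - b ^ 2 / 6) ^ 2 := by nlinarith [sq_nonneg (b ^ 2)]
  have hPQ := mul_le_mul hP hQ (by nlinarith) (sq_nonneg _)
  nlinarith [mul_le_mul_of_nonneg_left hPQ (by linarith : (0 : ℝ) ≤ x),
    mul_nonneg (sq_nonneg a) (sq_nonneg b)]

lemma mul_tan_sq_lt_mul_sin_sq {x : ℝ} (hx : 5 ≤ x) :
    x * tan (π / (2 * x)) ^ 2 < (x - 1) * sin (π / (2 * (x - 1))) ^ 2 := by
  have hfactors := sub_one_le_mul_taylor_factors hx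
  set a := π / (2 * x)
  set b := π / (2 * (x - 1))
  set c := π ^ 2 / 4
  have hc0 : 0 < c := by positivity
  have hxa : x * a ^ 2 = c / x := by simp only [a, c]; field_simp; ring
  have hxb : (x - 1) * b ^ 2 = c / (x - 1) := by
    simp only [b, c]; field_simp [show x - 1 ≠ 0 by linarith]; ring
  have ha0 : 0 < a := div_pos pi_pos (by linarith)
  have ha : a < 1 := by simp only [a]; rw [div_lt_one (by linarith)]; linarith [pi_lt_four]
  have hb0 : 0 < b := div_pos pi_pos (by linarith)
  have hb : b < 1 := by simp only [b]; rw [div_lt_one (by linarith)]; linarith [pi_lt_four]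
  calc x * tan a ^ 2 ≤ x * (a ^ 2 / (1 - a ^ 2 / 2) ^ 2) :=
        mul_le_mul_of_nonneg_left (tan_sq_le_of_sq_lt_two (by nlinarith)) (by linarith)
    _ = c / (x * (1 - a ^ 2 / 2) ^ 2) := by rw [← mul_div_assoc, hxa, div_div]
    _ ≤ c * (1 - b ^ 2 / 6) ^ 2 / (x - 1) := by
        rw [div_le_div_iff₀ (by nlinarith) (by linarith)]
        nlinarith [mul_le_mul_of_nonneg_left hfactors hc0.le]
    _ = (x - 1) * (b * (1 - b ^ 2 / 6)) ^ 2 := by rw [mul_pow, ← mul_assoc, hxb]; ring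
    _ < (x - 1) * sin b ^ 2 :=
        mul_lt_mul_of_pos_left (sq_mul_lt_sin_sq_of_sq_le_six hb0 (by nlinarith)) (by linarith)

theorem bipartiteBellMaxCycle_lt_lovaszNumberCycle {x : ℝ} (hx : 5 ≤ x) :
    bipartiteBellMaxCycle x < lovaszNumberCycle x := by
  have hcos : cos (π / (2 * x)) ≠ 0 := by
    refine (cos_pos_of_mem_Ioo ⟨?_, ?_⟩).ne'
    · linarith [show 0 < π / (2 * x) from div_pos pi_pos (by linarith), pi_pos]
    · rw [div_lt_div_iff₀ (by linarith) two_pos]; nlinarith [pi_pos]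
  rw [bipartiteBellMaxCycle_eq, lovaszNumberCycle_eq hcos]
  linarith [mul_tan_sq_lt_mul_sin_sq hx]

theorem bell_max_lt_lovasz_general (n : ℕ) (hn : 5 ≤ n) :
    1 / 2 + (((n : ℝ) - 1) / 4) * (1 + Real.cos (π / ((n : ℝ) - 1))) <
      (n : ℝ) * Real.cos (π / n) / (1 + Real.cos (π / n)) :=
  bipartiteBellMaxCycle_lt_lovaszNumberCycle (by exact_mod_cast hn)

/-- For every odd integer `n ≥ 5`, the maximum bipartite Bell value
`MB(C_n) = 1/2 + ((n-1)/4)·(1+cos(π/(n-1)))` is strictly smaller than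
the Lovász number `θ(C_n) = n·cos(π/n)/(1+cos(π/n))`. -/
theorem bell_max_lt_lovasz (n : ℕ) (hodd : Odd n) (hn : 5 ≤ n) :
    1 / 2 + (((n : ℝ) - 1) / 4) * (1 + Real.cos (π / ((n : ℝ) - 1))) <
      (n : ℝ) * Real.cos (π / n) / (1 + Real.cos (π / n)) :=
  bell_max_lt_lovasz_general n hn
end

section
/- For every odd integer n ≥ 5, the function f(t) = t/2 + ((n-t)/4)·(1 + cos(π/(n-t))), defined for odd integers t with 1 ≤ t ≤ n-4, attains its maximum at t = 1. -/
open Real Set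

/-!
Writing `m = n - t`, the value is `n / 2 - m (1 - cos (π / m)) / 4`, so it suffices that
`m ↦ m (1 - cos (π / m)) = π · (1 - cos u) / u` with `u = π / m` decreases in `m`, i.e. that
`u ↦ (1 - cos u) / u` increases. Its derivative has the sign of `u sin u - (1 - cos u)
= 2 sin (u/2) (u cos (u/2) - sin (u/2))`, which is positive as long as `cos (u/2) > 1/2`,
because `sin (u/2) < u/2`.
-/

theorem one_sub_cos_lt_mul_sin {u : ℝ} (hu₀ : 0 < u) (hu : u < 2 * π / 3) :
    1 - cos u < u * sin u := by
  obtain ⟨v, rfl⟩ : ∃ v, u = 2 * v := ⟨u / 2, by ring⟩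
  have hv₀ : 0 < v := by linarith
  have hcos : 1 / 2 < cos v := by
    rw [← cos_pi_div_three]
    exact cos_lt_cos_of_nonneg_of_le_pi hv₀.le (by linarith [pi_pos]) (by linarith)
  have hsin : 0 < sin v := sin_pos_of_pos_of_lt_pi hv₀ (by linarith)
  have hsin_lt : sin v < 2 * v * cos v := by nlinarith [sin_lt hv₀]
  rw [cos_two_mul, sin_two_mul]
  nlinarith [mul_lt_mul_of_pos_left hsin_lt hsin, sin_sq_add_cos_sq v]

theorem strictMonoOn_one_sub_cos_div :
    StrictMonoOn (fun u => (1 - cos u) / u) (Ioo 0 (2 * π / 3)) := by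
  refine strictMonoOn_of_deriv_pos (convex_Ioo _ _) ?_ fun u hu => ?_
  · exact ContinuousOn.div (by fun_prop) continuousOn_id fun u hu => hu.1.ne'
  rw [interior_Ioo] at hu
  rw [(((hasDerivAt_cos u).const_sub 1).fun_div (hasDerivAt_id' u) hu.1.ne').deriv]
  have hnum := one_sub_cos_lt_mul_sin hu.1 hu.2
  exact div_pos (by linarith) (pow_pos hu.1 2)

theorem strictAntiOn_mul_one_sub_cos_pi_div :
    StrictAntiOn (fun x => x * (1 - cos (π / x))) (Ioi (3 / 2)) := by
  intro a (ha : 3 / 2 < a) b (hb : 3 / 2 < b) hab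
  have mem : ∀ x : ℝ, 3 / 2 < x → π / x ∈ Ioo 0 (2 * π / 3) := fun x hx => by
    refine ⟨by positivity, ?_⟩
    rw [div_lt_div_iff₀ (by linarith) (by norm_num)]
    nlinarith [pi_pos]
  have key := strictMonoOn_one_sub_cos_div (mem b hb) (mem a ha)
    (div_lt_div_of_pos_left pi_pos (by linarith) hab)
  have hscale : ∀ x : ℝ, 0 < x → x * (1 - cos (π / x)) = π * ((1 - cos (π / x)) / (π / x)) :=
    fun x hx => by field_simp
  dsimp only
  rw [hscale a (by linarith), hscale b (by linarith)]
  exact mul_lt_mul_of_pos_left key pi_pos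

theorem strictAntiOn_coloured_lovasz (n : ℝ) :
    StrictAntiOn (fun t => t / 2 + ((n - t) / 4) * (1 + cos (π / (n - t)))) (Iio (n - 3 / 2)) := by
  intro s (hs : s < n - 3 / 2) t (ht : t < n - 3 / 2) hst
  have key := strictAntiOn_mul_one_sub_cos_pi_div (show 3 / 2 < n - t by linarith)
    (show 3 / 2 < n - s by linarith) (by linarith)
  linear_combination key / 4

theorem coloured_lovasz_max_at_one_general (n : ℕ)
    (t : ℕ) (ht1 : 1 ≤ t) (htn : t ≤ n - 4) :
    ((t : ℝ) / 2 + (((n : ℝ) - t) / 4) * (1 + Real.cos (π / ((n : ℝ) - t))) ≤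
      1 / 2 + (((n : ℝ) - 1) / 4) * (1 + Real.cos (π / ((n : ℝ) - 1)))) ∧
    (t ≠ 1 →
      (t : ℝ) / 2 + (((n : ℝ) - t) / 4) * (1 + Real.cos (π / ((n : ℝ) - t))) <
        1 / 2 + (((n : ℝ) - 1) / 4) * (1 + Real.cos (π / ((n : ℝ) - 1)))) := by
  rcases eq_or_ne t 1 with rfl | ht
  · simp
  have ht2 : (2 : ℝ) ≤ t := by norm_cast; omega
  have htn' : (t : ℝ) + 4 ≤ n := by norm_cast; omega
  have strict := strictAntiOn_coloured_lovasz n (show (1 : ℝ) < n - 3 / 2 by linarith)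
    (show (t : ℝ) < n - 3 / 2 by linarith) (by linarith)
  exact ⟨strict.le, fun _ => strict⟩

/-- For every odd integer `n ≥ 5`, the function
`f(t) = t/2 + ((n-t)/4)·(1 + cos(π/(n-t)))`, defined for odd integers `t` with
`1 ≤ t ≤ n-4`, attains its maximum at `t = 1`: `f(t) ≤ f(1)` with equality only at `t = 1`. -/
theorem coloured_lovasz_max_at_one (n : ℕ) (hodd : Odd n) (hn : 5 ≤ n)
    (t : ℕ) (ht : Odd t) (ht1 : 1 ≤ t) (htn : t ≤ n - 4) :
    ((t : ℝ) / 2 + (((n : ℝ) - t) / 4) * (1 + Real.cos (π / ((n : ℝ) - t))) ≤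
      1 / 2 + (((n : ℝ) - 1) / 4) * (1 + Real.cos (π / ((n : ℝ) - 1)))) ∧
    (t ≠ 1 →
      (t : ℝ) / 2 + (((n : ℝ) - t) / 4) * (1 + Real.cos (π / ((n : ℝ) - t))) <
        1 / 2 + (((n : ℝ) - 1) / 4) * (1 + Real.cos (π / ((n : ℝ) - 1)))) :=
  coloured_lovasz_max_at_one_general n t ht1 htn
end

section
/- Merging two colours of a coloured graph does not decrease its coloured Lovász number: if G has q colours and H is the (q-1)-coloured graph obtained by merging two colours of G (taking the union of the corresponding edge sets), then θ_c(H) ≥ θ_c(G). -/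
open Matrix BigOperators

/-- `r` is the value of some orthogonal projective representation (with handle `ψ`)
of the coloured multigraph on vertex set `V` with colours `C` and edge relations `E`.
Each vertex `i` receives the tensor-product projector `⊗_c P c i` (realised as a
generalised Kronecker product), and factors of adjacent vertices in each colour are
orthogonal. -/
def AchievesValue {V C : Type} [Fintype V] [Fintype C] [DecidableEq C]
    (E : C → V → V → Prop) (r : ℝ) : Prop :=
  ∃ (d : C → ℕ) (P : (c : C) → V → Matrix (Fin (d c)) (Fin (d c)) ℂ)
    (ψ : ((c : C) → Fin (d c)) → ℂ),
    (∀ c i, (P c i).IsHermitian ∧ P c i * P c i = P c i) ∧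
    (∀ c i j, E c i j → P c i * P c j = 0) ∧
    star ψ ⬝ᵥ ψ = 1 ∧
    r = ∑ i : V,
      (star ψ ⬝ᵥ ((Matrix.of fun x y : (c : C) → Fin (d c) =>
        ∏ c, P c i (x c) (y c)) *ᵥ ψ)).re

/-- The coloured (factor-constrained) Lovász number of a coloured multigraph. -/
noncomputable def colouredLovasz {V C : Type} [Fintype V] [Fintype C] [DecidableEq C]
    (E : C → V → V → Prop) : ℝ :=
  sSup {r | AchievesValue E r}

section Aux

open Complex

/-- re of ⟨v, v⟩ is nonnegative. -/
lemma aux_re_star_dot_self_nonneg {n : Type} [Fintype n] (v : n → ℂ) :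
    0 ≤ (star v ⬝ᵥ v).re := by
  simp only [dotProduct, Pi.star_apply, Complex.re_sum]
  refine Finset.sum_nonneg fun x _ => ?_
  have : (starRingEnd ℂ) (v x) * v x = (Complex.normSq (v x) : ℂ) :=
    (Complex.normSq_eq_conj_mul_self).symm
  rw [show star (v x) = (starRingEnd ℂ) (v x) from rfl, this]
  simpa using Complex.normSq_nonneg (v x)

lemma aux_herm_idem_nonneg {n : Type} [Fintype n] [DecidableEq n]
    (M : Matrix n n ℂ) (h1 : M.IsHermitian) (h2 : M * M = M) (ψ : n → ℂ) :
    0 ≤ (star ψ ⬝ᵥ (M *ᵥ ψ)).re := by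
  have key : star (M *ᵥ ψ) ⬝ᵥ (M *ᵥ ψ) = star ψ ⬝ᵥ (M *ᵥ ψ) := by
    rw [star_mulVec, ← Matrix.dotProduct_mulVec, Matrix.mulVec_mulVec, h1.eq, h2]
  rw [← key]
  exact aux_re_star_dot_self_nonneg _

lemma aux_term_le_one {n : Type} [Fintype n] [DecidableEq n]
    (M : Matrix n n ℂ) (h1 : M.IsHermitian) (h2 : M * M = M) (ψ : n → ℂ)
    (hψ : star ψ ⬝ᵥ ψ = 1) :
    (star ψ ⬝ᵥ (M *ᵥ ψ)).re ≤ 1 := by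
  have h1' : (1 - M).IsHermitian := (Matrix.isHermitian_one).sub h1
  have h2' : (1 - M) * (1 - M) = 1 - M := by
    rw [mul_one_sub, one_sub_mul, h2, sub_self, sub_zero]
  have hval : (star ψ ⬝ᵥ ((1 - M) *ᵥ ψ)).re = 1 - (star ψ ⬝ᵥ (M *ᵥ ψ)).re := by
    rw [Matrix.sub_mulVec, Matrix.one_mulVec, dotProduct_sub, hψ]
    simp [Complex.sub_re]
  have := aux_herm_idem_nonneg (1 - M) h1' h2' ψ
  linarith [hval ▸ this]

/-- The big tensor-product matrix of Hermitian matrices is Hermitian. -/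
lemma aux_bigM_herm {C : Type} [Fintype C] {d : C → ℕ}
    (Q : (c : C) → Matrix (Fin (d c)) (Fin (d c)) ℂ)
    (h : ∀ c, (Q c).IsHermitian) :
    (Matrix.of fun x y : (c : C) → Fin (d c) => ∏ c, Q c (x c) (y c)).IsHermitian := by
  refine Matrix.IsHermitian.ext fun x y => ?_
  simp only [Matrix.of_apply]
  rw [show (star (∏ c, Q c (y c) (x c)) : ℂ) = ∏ c, star (Q c (y c) (x c)) from
    map_prod (starRingEnd ℂ) _ _]
  exact Finset.prod_congr rfl fun c _ => (h c).apply (x c) (y c)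

/-- The big tensor-product matrix of idempotent matrices is idempotent. -/
lemma aux_bigM_idem {C : Type} [Fintype C] [DecidableEq C] {d : C → ℕ}
    (Q : (c : C) → Matrix (Fin (d c)) (Fin (d c)) ℂ)
    (h : ∀ c, Q c * Q c = Q c) :
    (Matrix.of fun x y : (c : C) → Fin (d c) => ∏ c, Q c (x c) (y c)) *
      (Matrix.of fun x y : (c : C) → Fin (d c) => ∏ c, Q c (x c) (y c)) =
      (Matrix.of fun x y : (c : C) → Fin (d c) => ∏ c, Q c (x c) (y c)) := by
  ext x y
  simp only [Matrix.mul_apply, Matrix.of_apply]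
  calc ∑ z : (c : C) → Fin (d c), (∏ c, Q c (x c) (z c)) * ∏ c, Q c (z c) (y c)
      = ∑ z : (c : C) → Fin (d c), ∏ c, (Q c (x c) (z c) * Q c (z c) (y c)) := by
        refine Finset.sum_congr rfl fun z _ => ?_
        rw [Finset.prod_mul_distrib]
    _ = ∏ c, ∑ t, Q c (x c) t * Q c t (y c) :=
        (Fintype.prod_sum (fun c t => Q c (x c) t * Q c t (y c))).symm
    _ = ∏ c, (Q c * Q c) (x c) (y c) := by
        refine Finset.prod_congr rfl fun c _ => ?_
        rw [Matrix.mul_apply]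
    _ = ∏ c, Q c (x c) (y c) := by
        refine Finset.prod_congr rfl fun c _ => ?_
        rw [h c]

lemma aux_bddAbove {V C : Type} [Fintype V] [Fintype C] [DecidableEq C]
    (E : C → V → V → Prop) : BddAbove {r | AchievesValue E r} := by
  refine ⟨(Fintype.card V : ℝ), fun r hr => ?_⟩
  obtain ⟨d, P, ψ, hP, hE, hψ, hr⟩ := hr
  rw [hr]
  calc ∑ i : V, (star ψ ⬝ᵥ ((Matrix.of fun x y : (c : C) → Fin (d c) =>
        ∏ c, P c i (x c) (y c)) *ᵥ ψ)).re
      ≤ ∑ _i : V, (1 : ℝ) := by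
        refine Finset.sum_le_sum fun i _ => ?_
        exact aux_term_le_one _ (aux_bigM_herm _ fun c => (hP c i).1)
          (aux_bigM_idem _ fun c => (hP c i).2) ψ hψ
    _ = (Fintype.card V : ℝ) := by simp

lemma aux_nonempty {V C : Type} [Fintype V] [Fintype C] [DecidableEq C]
    (E : C → V → V → Prop) : {r | AchievesValue E r}.Nonempty := by
  refine ⟨_, ⟨fun _ => 1, fun _ _ => 0, fun _ => 1, fun c i => ⟨?_, ?_⟩,
    fun c i j _ => ?_, ?_, rfl⟩⟩
  · exact Matrix.isHermitian_zero
  · simp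
  · simp
  · simp only [dotProduct, Pi.star_apply, star_one, one_mul, Finset.sum_const,
      Finset.card_univ, nsmul_eq_mul, mul_one]
    norm_cast
    simp [Fintype.card_pi]

end Aux

/-- Merging two colours of a coloured multigraph does not decrease its coloured
Lovász number: if `H` is obtained from `G` by merging colour `b` into colour `a`
(taking the union of the corresponding edge sets, the colour set dropping from `q`
to `q-1`), then `θ_c(H) ≥ θ_c(G)`. -/
theorem merging_colours_le_colouredLovasz {V C : Type} [Fintype V] [Fintype C]
    [DecidableEq C] (E : C → V → V → Prop) (a b : C) (hab : a ≠ b) :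
    colouredLovasz (fun (c : {c : C // c ≠ b}) (i j : V) =>
        if (c : C) = a then (E a i j ∨ E b i j) else E (c : C) i j) ≥
      colouredLovasz E := by
  classical
  refine csSup_le_csSup (aux_bddAbove _) (aux_nonempty E) ?_
  rintro r ⟨d, P, ψ, hP, hE, hψ, hr⟩
  open Kronecker in
  let a' : {c : C // c ≠ b} := ⟨a, hab⟩
  let d' : {c : C // c ≠ b} → ℕ := fun c => if (c : C) = a then d a * d b else d (c : C)
  have hA : ∀ c : {c : C // c ≠ b}, (c : C) = a → d' c = d a * d b :=
    fun c h => by simp [d', h]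
  have hO : ∀ c : {c : C // c ≠ b}, (c : C) ≠ a → d' c = d (c : C) :=
    fun c h => by simp [d', h]
  let qA : ∀ c : {c : C // c ≠ b}, (c : C) = a → (Fin (d' c) ≃ Fin (d a) × Fin (d b)) :=
    fun c h => (finCongr (hA c h)).trans finProdFinEquiv.symm
  let P' : (c : {c : C // c ≠ b}) → V → Matrix (Fin (d' c)) (Fin (d' c)) ℂ :=
    fun c i =>
      if h : (c : C) = a then
        ((P a i ⊗ₖ P b i).submatrix (qA c h) (qA c h))
      else
        ((P (c : C) i).submatrix (finCongr (hO c h)) (finCongr (hO c h)))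
  let eF : ((c : {c : C // c ≠ b}) → Fin (d' c)) → ((c : C) → Fin (d c)) := fun x c =>
    if h : c = b then (finCongr (congrArg d h)).symm (qA a' rfl (x a')).2
    else if h2 : c = a then (finCongr (congrArg d h2)).symm (qA a' rfl (x a')).1
    else finCongr (hO ⟨c, h⟩ h2) (x ⟨c, h⟩)
  let gF : ((c : C) → Fin (d c)) → ((c : {c : C // c ≠ b}) → Fin (d' c)) := fun y c =>
    if h : (c : C) = a then (qA c h).symm (y a, y b)
    else (finCongr (hO c h)).symm (y (c : C))
  have hgf : ∀ x, gF (eF x) = x := by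
    intro x
    funext c
    by_cases h : (c : C) = a
    · have hc : c = a' := Subtype.ext h
      subst hc
      simp only [gF, eF, dif_pos h, dif_neg hab, dif_pos rfl, finCongr_refl,
        Equiv.refl_symm, Equiv.refl_apply]
      exact (qA a' h).symm_apply_apply _
    · simp only [gF, eF, dif_neg h, dif_neg c.2]
      exact (finCongr (hO c h)).symm_apply_apply _
  have hfg : ∀ y, eF (gF y) = y := by
    intro y
    funext c
    by_cases h : c = b
    · have h' := h.symm
      subst h'
      simp [eF, gF, a', dite_true, Equiv.apply_symm_apply]
    · by_cases h2 : c = a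
      · have h2' := h2.symm
        subst h2'
        simp [eF, gF, a', hab, dite_true, Equiv.apply_symm_apply]
      · simp only [eF, dif_neg h, dif_neg h2, gF,
          dif_neg (show ((⟨c, h⟩ : {c : C // c ≠ b}) : C) ≠ a from h2)]
        exact (finCongr (hO ⟨c, h⟩ h2)).apply_symm_apply _
  let Eqv : ((c : {c : C // c ≠ b}) → Fin (d' c)) ≃ ((c : C) → Fin (d c)) :=
    ⟨eF, gF, hgf, hfg⟩
  -- the key pointwise product identity
  have key : ∀ (i : V) (x y : (c : {c : C // c ≠ b}) → Fin (d' c)),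
      ∏ c : {c : C // c ≠ b}, P' c i (x c) (y c) =
        ∏ c : C, P c i (eF x c) (eF y c) := by
    intro i x y
    set F : C → ℂ := fun c => P c i (eF x c) (eF y c) with hF
    have h1 : ∏ c : C, F c = F b * ∏ c : {c : C // c ≠ b}, F (c : C) := by
      rw [← Finset.mul_prod_erase Finset.univ F (Finset.mem_univ b)]
      congr 1
      exact Finset.prod_subtype _ (by simp [Finset.mem_erase]) F
    have h2 : ∏ c : {c : C // c ≠ b}, F (c : C) =
        F a * ∏ c ∈ Finset.univ.erase a', F (c : C) := by
      rw [← Finset.mul_prod_erase Finset.univ (fun c : {c : C // c ≠ b} => F (c : C))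
        (Finset.mem_univ a')]
    have h3 : ∏ c : {c : C // c ≠ b}, P' c i (x c) (y c) =
        (F a * F b) * ∏ c ∈ Finset.univ.erase a', F (c : C) := by
      rw [← Finset.mul_prod_erase Finset.univ (fun c : {c : C // c ≠ b} => P' c i (x c) (y c))
        (Finset.mem_univ a')]
      congr 1
      · -- P' a' i (x a') (y a') = F a * F b
        simp only [P', dif_pos (show ((a' : C) = a) from rfl), Matrix.submatrix_apply,
          Matrix.kroneckerMap_apply]
        congr 1
        · simp [hF, eF, a', hab, dite_true]
        · simp [hF, eF, a', dite_true]
      · refine Finset.prod_congr rfl fun c hc => ?_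
        have h2 : (c : C) ≠ a := fun hca => (Finset.mem_erase.mp hc).1 (Subtype.ext hca)
        have hb : (c : C) ≠ b := c.2
        simp only [P', dif_neg h2, Matrix.submatrix_apply, hF, eF, dif_neg hb, dif_neg h2]
    rw [h3, h1, h2]
    ring
  refine ⟨d', P', ψ ∘ eF, ?_, ?_, ?_, ?_⟩
  · intro c i
    constructor
    · by_cases h : (c : C) = a
      · show (P' c i).IsHermitian
        simp only [P', dif_pos h]
        refine Matrix.IsHermitian.ext fun u v => ?_
        simp only [Matrix.submatrix_apply, Matrix.kroneckerMap_apply]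
        rw [star_mul']
        congr 1
        · exact (hP a i).1.apply _ _
        · exact (hP b i).1.apply _ _
      · show (P' c i).IsHermitian
        simp only [P', dif_neg h]
        refine Matrix.IsHermitian.ext fun u v => ?_
        simp only [Matrix.submatrix_apply]
        exact (hP (c : C) i).1.apply _ _
    · by_cases h : (c : C) = a
      · show P' c i * P' c i = P' c i
        simp only [P', dif_pos h]
        rw [Matrix.submatrix_mul_equiv, ← Matrix.mul_kronecker_mul, (hP a i).2, (hP b i).2]
      · show P' c i * P' c i = P' c i
        simp only [P', dif_neg h]
        rw [Matrix.submatrix_mul_equiv, (hP (c : C) i).2]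
  · intro c i j hij
    by_cases h : (c : C) = a
    · rw [if_pos h] at hij
      show P' c i * P' c j = 0
      simp only [P', dif_pos h]
      rw [Matrix.submatrix_mul_equiv, ← Matrix.mul_kronecker_mul]
      rcases hij with hij | hij
      · rw [hE a i j hij, Matrix.zero_kronecker]
        simp
      · rw [hE b i j hij, Matrix.kronecker_zero]
        simp
    · rw [if_neg h] at hij
      show P' c i * P' c j = 0
      simp only [P', dif_neg h]
      rw [Matrix.submatrix_mul_equiv, hE (c : C) i j hij]
      simp
  · calc star (ψ ∘ eF) ⬝ᵥ (ψ ∘ eF)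
        = ∑ x : (c : {c : C // c ≠ b}) → Fin (d' c), star (ψ (Eqv x)) * ψ (Eqv x) := rfl
      _ = ∑ z : (c : C) → Fin (d c), star (ψ z) * ψ z :=
          Equiv.sum_comp Eqv (fun z => star (ψ z) * ψ z)
      _ = 1 := hψ
  · rw [hr]
    refine Finset.sum_congr rfl fun i _ => ?_
    congr 1
    calc star ψ ⬝ᵥ ((Matrix.of fun x y : (c : C) → Fin (d c) =>
          ∏ c, P c i (x c) (y c)) *ᵥ ψ)
        = ∑ z : (c : C) → Fin (d c), star (ψ z) *
            ((Matrix.of fun x y : (c : C) → Fin (d c) => ∏ c, P c i (x c) (y c)) *ᵥ ψ) z := rfl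
      _ = ∑ x : (c : {c : C // c ≠ b}) → Fin (d' c), star (ψ (Eqv x)) *
            ((Matrix.of fun x y : (c : C) → Fin (d c) => ∏ c, P c i (x c) (y c)) *ᵥ ψ) (Eqv x) :=
          (Equiv.sum_comp Eqv fun z => star (ψ z) *
            ((Matrix.of fun x y : (c : C) → Fin (d c) => ∏ c, P c i (x c) (y c)) *ᵥ ψ) z).symm
      _ = star (ψ ∘ eF) ⬝ᵥ ((Matrix.of fun x y : (c : {c : C // c ≠ b}) → Fin (d' c) =>
            ∏ c, P' c i (x c) (y c)) *ᵥ (ψ ∘ eF)) := by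
          refine Finset.sum_congr rfl fun x _ => ?_
          congr 1
          show ((Matrix.of fun x y : (c : C) → Fin (d c) =>
              ∏ c, P c i (x c) (y c)) *ᵥ ψ) (eF x) =
            ∑ y : (c : {c : C // c ≠ b}) → Fin (d' c),
              (∏ c : {c : C // c ≠ b}, P' c i (x c) (y c)) * ψ (eF y)
          rw [show (∑ y : (c : {c : C // c ≠ b}) → Fin (d' c),
              (∏ c : {c : C // c ≠ b}, P' c i (x c) (y c)) * ψ (eF y)) =
              ∑ y : (c : {c : C // c ≠ b}) → Fin (d' c),
              (∏ c : C, P c i (eF x c) (eF y c)) * ψ (eF y) from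
            Finset.sum_congr rfl fun y _ => by rw [key i x y]]
          exact (Equiv.sum_comp Eqv fun z =>
            (∏ c : C, P c i (eF x c) (z c)) * ψ z).symm
end
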